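/- arXiv:1801.09270 — 5 statements merged into one kernel-verified Lean document; each statement's English description precedes it below -/
import Mathlib

section
/- Let (C, ∂) be a free, finitely generated chain complex over R = 𝔽₂[[U]]. Then there exist finite index sets I and J, natural numbers (n_i)_{i∈I}, and an R-basis of C consisting of elements (a_i)_{i∈I}, (b_i)_{i∈I}, (c_j)_{j∈J} such that ∂(a_i) = U^{n_i}·b_i, ∂(b_i) = 0 and ∂(c_j) = 0 for all i ∈ I and j ∈ J. In other words, C is chain isomorphic to a direct sum of 1-step complexes (a single free generator with vanishing differential) and 2-step complexes of the form a →(multiplication by U^n)→ b. (Lemma 3.1 of the paper.) -/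
noncomputable section

abbrev F2 : Type := ZMod 2

/-- `R = 𝔽₂[[U]]`, the ring of formal power series over `𝔽₂`. -/
abbrev R2 : Type := PowerSeries F2

/-!
Since `∂ ∘ ∂ = 0`, the image of `∂` lies in its kernel, and over a principal ideal domain the
Smith normal form gives compatible bases: a basis `(z_j)` of `ker ∂` and a basis
`(α_i z_i)_{i < m}` of `im ∂` with `α_i ≠ 0`. Lifting `α_i z_i = ∂ y_i`, the `y_i` together with
the `z_j` form a basis of `C`, since `C / ker ∂ ≅ im ∂` is free on the images of the `y_i`.
Over the discrete valuation ring `𝔽₂[[U]]` each `α_i` is a unit times `U^{n_i}`, and the unit is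
absorbed into `y_i`.
-/

open Module Submodule

theorem Module.Basis.span_range_subtype_comp {R M ι : Type*} [Semiring R] [AddCommMonoid M]
    [Module R M] {p : Submodule R M} (b : Basis ι R p) :
    span R (Set.range (p.subtype ∘ b)) = p := by
  rw [Set.range_comp, span_image, b.span_eq, map_subtype_top]

namespace LinearMap

section BasisOfKerRange

variable {R M N ι κ : Type*} [Ring R] [AddCommGroup M] [AddCommGroup N] [Module R M] [Module R N]
  {f : M →ₗ[R] N} (bK : Basis κ R (ker f)) (bR : Basis ι R (range f)) {s : ι → M}

theorem linearIndependent_sumElim_of_basis_ker_range (hs : ∀ i, f (s i) = bR i) :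
    LinearIndependent R (Sum.elim (fun j ↦ (bK j : M)) s) := by
  refine bK.linearIndependent.sumElim_of_quotient s (.of_comp ((ker f).liftQ f le_rfl) ?_)
  convert bR.linearIndependent.map' (range f).subtype (ker_subtype _) using 1
  ext i
  exact hs i

theorem span_range_sumElim_of_basis_ker_range (hs : ∀ i, f (s i) = bR i) :
    span R (Set.range (Sum.elim (fun j ↦ (bK j : M)) s)) = ⊤ := by
  have hmap : map f (span R (Set.range s)) = range f := by
    rw [← span_image, ← Set.range_comp, ← bR.span_range_subtype_comp]
    congr 2
    ext i
    exact hs i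
  have hker : span R (Set.range fun j ↦ (bK j : M)) = ker f := bK.span_range_subtype_comp
  rw [Set.Sum.elim_range, span_union, hker, sup_comm, ← comap_map_eq, hmap]
  exact range_le_iff_comap.mp le_rfl

def basisOfKerRange (hs : ∀ i, f (s i) = bR i) : Basis (κ ⊕ ι) R M :=
  .mk (linearIndependent_sumElim_of_basis_ker_range bK bR hs)
    (span_range_sumElim_of_basis_ker_range bK bR hs).ge

@[simp]
theorem basisOfKerRange_inl (hs : ∀ i, f (s i) = bR i) (j : κ) :
    basisOfKerRange bK bR hs (.inl j) = bK j := by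
  simp [basisOfKerRange]

@[simp]
theorem basisOfKerRange_inr (hs : ∀ i, f (s i) = bR i) (i : ι) :
    basisOfKerRange bK bR hs (.inr i) = s i := by
  simp [basisOfKerRange]

end BasisOfKerRange

section SplitBasis

variable {R M ι κ : Type*}

/-- `B` exhibits `(M, d)` as a direct sum of the two-step complexes
`B (inl (inl i)) ↦ a i • B (inl (inr i))` and the one-step complexes `B (inr j)`. -/
def IsSplitBasis [Semiring R] [AddCommMonoid M] [Module R M] (d : M →ₗ[R] M) (a : ι → R)
    (B : Basis ((ι ⊕ ι) ⊕ κ) R M) : Prop :=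
  (∀ i, d (B (.inl (.inl i))) = a i • B (.inl (.inr i))) ∧
    (∀ i, d (B (.inl (.inr i))) = 0) ∧ ∀ j, d (B (.inr j)) = 0

theorem IsSplitBasis.unitsSMul [Semiring R] [AddCommMonoid M] [Module R M] {d : M →ₗ[R] M}
    {a : ι → R} {B : Basis ((ι ⊕ ι) ⊕ κ) R M} (u : ι → Rˣ)
    (hB : IsSplitBasis d (fun i ↦ u i * a i) B) :
    IsSplitBasis d a (B.unitsSMul (Sum.elim (Sum.elim (fun i ↦ (u i)⁻¹) 1) 1)) := by
  obtain ⟨hpair, hcycle, hsingle⟩ := hB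
  refine ⟨fun i ↦ ?_, fun i ↦ by simpa [Basis.unitsSMul_apply] using hcycle i,
    fun j ↦ by simpa [Basis.unitsSMul_apply] using hsingle j⟩
  simp only [Basis.unitsSMul_apply, Sum.elim_inl, Sum.elim_inr, Pi.one_apply, one_smul,
    Units.smul_def, map_smul, hpair, smul_smul, ← mul_assoc, Units.inv_mul, one_mul]

theorem exists_isSplitBasis [CommRing R] [IsDomain R] [IsPrincipalIdealRing R] [AddCommGroup M]
    [Module R M] [Module.Free R M] [Module.Finite R M] {d : M →ₗ[R] M} (hd : d ∘ₗ d = 0) :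
    ∃ (m k : ℕ) (a : Fin m → R) (B : Basis ((Fin m ⊕ Fin m) ⊕ Fin k) R M),
      (∀ i, a i ≠ 0) ∧ IsSplitBasis d a B := by
  obtain ⟨m, o, hmo, bK, bR, a, hsnf⟩ := exists_smith_normal_form_of_le (Free.chooseBasis R M)
    (range d) (ker d) (range_le_ker_iff.mpr hd)
  choose s hs using fun i ↦ (bR i).2
  let bK' := bK.reindex (finSumFinEquiv.trans (finCongr (Nat.add_sub_cancel' hmo))).symm
  have hbK' : ∀ i, (bR i : M) = a i • bK' (.inl i) := by
    intro i
    rw [hsnf, Basis.reindex_apply, Equiv.symm_symm]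
    rfl
  let B := (basisOfKerRange bK' bR hs).reindex
    ((Equiv.sumComm _ _).trans (Equiv.sumAssoc _ _ _).symm)
  refine ⟨m, o - m, a, B, fun i ha ↦ bR.ne_zero i (Subtype.ext ?_),
    fun i ↦ by simp [B, hs, hbK'], fun i ↦ by simp [B], fun j ↦ by simp [B]⟩
  rw [hbK', ha, zero_smul, ZeroMemClass.coe_zero]

theorem exists_isSplitBasis_pow [CommRing R] [IsDomain R] [IsDiscreteValuationRing R]
    [AddCommGroup M] [Module R M] [Module.Free R M] [Module.Finite R M] {ϖ : R}
    (hϖ : Irreducible ϖ) {d : M →ₗ[R] M} (hd : d ∘ₗ d = 0) :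
    ∃ (m k : ℕ) (n : Fin m → ℕ) (B : Basis ((Fin m ⊕ Fin m) ⊕ Fin k) R M),
      IsSplitBasis d (fun i ↦ ϖ ^ n i) B := by
  obtain ⟨m, k, a, B, ha, hB⟩ := exists_isSplitBasis hd
  choose n u hu using fun i ↦ IsDiscreteValuationRing.eq_unit_mul_pow_irreducible (ha i) hϖ
  rw [funext hu] at hB
  exact ⟨m, k, n, _, hB.unitsSMul u⟩

end SplitBasis

end LinearMap

/-- **Classification of free, finitely generated chain complexes over `𝔽₂[[U]]`**
(Lemma 3.1): any such complex is chain isomorphic to a direct sum of 1-step complexes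
(a single free generator `c_j` with vanishing differential) and 2-step complexes
`a_i →(·U^{n_i})→ b_i`.  Equivalently, there is a basis `(a_i)_{i∈I}, (b_i)_{i∈I},
(c_j)_{j∈J}` of `C` with `∂ a_i = U^{n_i} • b_i`, `∂ b_i = 0` and `∂ c_j = 0`. -/
theorem classification_of_fg_free_complexes_over_F2UU
    (M : Type) [AddCommGroup M] [Module R2 M] [Module.Free R2 M] [Module.Finite R2 M]
    (d : M →ₗ[R2] M) (hd : d ∘ₗ d = 0) :
    ∃ (m k : ℕ) (n : Fin m → ℕ) (B : Module.Basis ((Fin m ⊕ Fin m) ⊕ Fin k) R2 M),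
      (∀ i : Fin m, d (B (Sum.inl (Sum.inl i))) =
        (PowerSeries.X ^ n i : R2) • B (Sum.inl (Sum.inr i))) ∧
      (∀ i : Fin m, d (B (Sum.inl (Sum.inr i))) = 0) ∧
      (∀ j : Fin k, d (B (Sum.inr j)) = 0) :=
  LinearMap.exists_isSplitBasis_pow PowerSeries.X_irreducible hd

end
end

section
/- Let (C, ∂) be a free, finitely generated chain complex over R = 𝔽₂[[U]]. If H⁺(C) is finite-dimensional as an 𝔽₂-vector space, then H^∞(C) = 0. (Lemma 3.2 of the paper.) -/
open scoped TensorProduct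

noncomputable section

abbrev L2 : Type := LaurentSeries F2

/-- The inclusion `ι : C → C^∞ = L ⊗_R C`, `x ↦ 1 ⊗ x`. -/
def iotaMap (N : Type) [AddCommGroup N] [Module R2 N] : N →ₗ[R2] L2 ⊗[R2] N :=
  TensorProduct.mk R2 L2 N 1

/-- The differential `∂^∞` on `C^∞ = L ⊗_R C`. -/
def dInf {N : Type} [AddCommGroup N] [Module R2 N] (f : N →ₗ[R2] N) :
    L2 ⊗[R2] N →ₗ[R2] L2 ⊗[R2] N :=
  (LinearMap.baseChange L2 f).restrictScalars R2

/-- The quotient `C⁺ = C^∞ / ι(C)`. -/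
abbrev CPlus (N : Type) [AddCommGroup N] [Module R2 N] : Type :=
  (L2 ⊗[R2] N) ⧸ LinearMap.range (iotaMap N)

/-- The differential `∂⁺` induced on `C⁺`. -/
def dPlusMap {N : Type} [AddCommGroup N] [Module R2 N] (f : N →ₗ[R2] N) :
    CPlus N →ₗ[R2] CPlus N :=
  Submodule.mapQ _ _ (dInf f) (by
    rintro _ ⟨x, rfl⟩
    simp only [Submodule.mem_comap]
    exact ⟨f x, by simp [iotaMap, dInf]⟩)

/-- The homology `ker f / im f` of a differential `f` with `f ∘ f = 0`. -/
abbrev homologyOf {N : Type} [AddCommGroup N] [Module R2 N] (f : N →ₗ[R2] N) : Type :=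
  LinearMap.ker f ⧸ (LinearMap.range f).comap (LinearMap.ker f).subtype

/-- Any `R = 𝔽₂[[U]]`-module is an `𝔽₂`-vector space. -/
instance instModuleF2 {X : Type} [AddCommGroup X] [Module R2 X] :
    Module F2 X :=
  Module.compHom X (algebraMap F2 R2)

instance instTowerF2 {X : Type} [AddCommGroup X] [Module R2 X] :
    IsScalarTower F2 R2 X :=
  ⟨fun a r x => by rw [Algebra.smul_def, mul_smul]; rfl⟩

/-- The map induced on homology by a chain map. -/
def inducedHom {N1 N2 : Type} [AddCommGroup N1] [Module R2 N1] [AddCommGroup N2] [Module R2 N2]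
    (d1 : N1 →ₗ[R2] N1) (d2 : N2 →ₗ[R2] N2) (f : N1 →ₗ[R2] N2)
    (hf : d2 ∘ₗ f = f ∘ₗ d1) :
    homologyOf d1 →ₗ[R2] homologyOf d2 :=
  Submodule.liftQ _
    ((Submodule.mkQ _) ∘ₗ f.restrict (p := LinearMap.ker d1) (q := LinearMap.ker d2)
      (fun x hx => by
        have h := LinearMap.congr_fun hf x
        simp only [LinearMap.comp_apply] at h
        simp only [LinearMap.mem_ker] at hx ⊢
        rw [h, hx, map_zero]))
    (by
      rintro ⟨x, hxk⟩ hx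
      simp only [Submodule.mem_comap, Submodule.coe_subtype, LinearMap.mem_range] at hx
      obtain ⟨w, hw⟩ := hx
      simp only [LinearMap.mem_ker, LinearMap.comp_apply, Submodule.mkQ_apply]
      rw [Submodule.Quotient.mk_eq_zero]
      simp only [Submodule.mem_comap, Submodule.coe_subtype, LinearMap.mem_range]
      refine ⟨f w, ?_⟩
      have h := LinearMap.congr_fun hf w
      simp only [LinearMap.comp_apply] at h
      rw [h, hw]
      rfl)

/-- The map `H⁻(C) → H^∞(C)` induced by `ι`. -/
def mapMinusInf {M : Type} [AddCommGroup M] [Module R2 M] (d : M →ₗ[R2] M) :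
    homologyOf d →ₗ[R2] homologyOf (dInf d) :=
  inducedHom d (dInf d) (iotaMap M) (by
    ext x
    simp [dInf, iotaMap])

/-- The map `H^∞(C) → H⁺(C)` induced by the quotient projection. -/
def mapInfPlus {M : Type} [AddCommGroup M] [Module R2 M] (d : M →ₗ[R2] M) :
    homologyOf (dInf d) →ₗ[R2] homologyOf (dPlusMap d) :=
  inducedHom (dInf d) (dPlusMap d) (Submodule.mkQ _) (by
    ext x
    simp [dPlusMap, Submodule.mapQ_apply])

/-- `δ : H⁺(C) → H⁻(C)` is the connecting homomorphism: the class of a cycle `x ∈ C⁺` is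
sent to the class of the unique `y ∈ C` with `ι y = ∂^∞ x̃` for a lift `x̃` of `x`. -/
def IsConnecting {M : Type} [AddCommGroup M] [Module R2 M] (d : M →ₗ[R2] M)
    (δ : homologyOf (dPlusMap d) →ₗ[R2] homologyOf d) : Prop :=
  ∀ (x : L2 ⊗[R2] M) (y : M), iotaMap M y = dInf d x →
    ∀ (h1 : Submodule.mkQ (LinearMap.range (iotaMap M)) x ∈ LinearMap.ker (dPlusMap d))
      (h2 : y ∈ LinearMap.ker d),
      δ (Submodule.Quotient.mk ⟨Submodule.mkQ (LinearMap.range (iotaMap M)) x, h1⟩) =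
        Submodule.Quotient.mk ⟨y, h2⟩


section Aux

lemma algebraMap_R2_L2_injective : Function.Injective (algebraMap R2 L2) :=
  IsFractionRing.injective R2 L2

lemma iotaMap_injective (M : Type) [AddCommGroup M] [Module R2 M] [Module.Free R2 M] :
    Function.Injective (iotaMap M) := by
  have h : Function.Injective (LinearMap.rTensor M (Algebra.linearMap R2 L2)) :=
    Module.Flat.rTensor_preserves_injective_linearMap _ algebraMap_R2_L2_injective
  intro x y hxy
  have hx : ∀ z : M, (LinearMap.rTensor M (Algebra.linearMap R2 L2))
      ((TensorProduct.lid R2 M).symm z) = iotaMap M z := by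
    intro z
    simp [iotaMap, TensorProduct.lid_symm_apply]
  have heq : (LinearMap.rTensor M (Algebra.linearMap R2 L2)) ((TensorProduct.lid R2 M).symm x)
      = (LinearMap.rTensor M (Algebra.linearMap R2 L2)) ((TensorProduct.lid R2 M).symm y) := by
    rw [hx x, hx y]; exact hxy
  exact (TensorProduct.lid R2 M).symm.injective (h heq)

lemma dInf_iota (M : Type) [AddCommGroup M] [Module R2 M] (d : M →ₗ[R2] M) (x : M) :
    dInf d (iotaMap M x) = iotaMap M (d x) := by
  simp [dInf, iotaMap]

lemma dInf_sq (M : Type) [AddCommGroup M] [Module R2 M] (d : M →ₗ[R2] M)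
    (hd : d ∘ₗ d = 0) (x : L2 ⊗[R2] M) : dInf d (dInf d x) = 0 := by
  have h : LinearMap.baseChange L2 d ∘ₗ LinearMap.baseChange L2 d
      = LinearMap.baseChange L2 (d ∘ₗ d) := (LinearMap.baseChange_comp d d).symm
  have := LinearMap.congr_fun h x
  simp only [LinearMap.comp_apply, hd, LinearMap.baseChange_zero, LinearMap.zero_apply] at this
  exact this

lemma exists_X_smul (M : Type) [AddCommGroup M] [Module R2 M] (d : M →ₗ[R2] M)
    (z : homologyOf (dInf d)) : ∃ z', z = (PowerSeries.X : R2) • z' := by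
  obtain ⟨⟨x, hx⟩, rfl⟩ := Submodule.Quotient.mk_surjective _ z
  have hX0 : (algebraMap R2 L2) PowerSeries.X ≠ 0 := by
    intro h
    exact PowerSeries.X_ne_zero (algebraMap_R2_L2_injective (by simpa using h))
  set c : L2 := ((algebraMap R2 L2) PowerSeries.X)⁻¹ with hc
  have hy : c • x ∈ LinearMap.ker (dInf d) := by
    have hx0 : LinearMap.baseChange L2 d x = 0 := hx
    show LinearMap.baseChange L2 d (c • x) = 0
    rw [map_smul, hx0, smul_zero]
  refine ⟨Submodule.Quotient.mk ⟨c • x, hy⟩, ?_⟩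
  rw [← Submodule.Quotient.mk_smul]
  congr 1
  ext
  show x = (PowerSeries.X : R2) • (c • x)
  rw [hc, ← algebraMap_smul L2 (PowerSeries.X : R2)
    (((algebraMap R2 L2) PowerSeries.X)⁻¹ • x)]
  exact (smul_inv_smul₀ (α := L2) (β := L2 ⊗[R2] M) hX0 x).symm

set_option maxHeartbeats 1000000 in
lemma homologyOf_finite (M : Type) [AddCommGroup M] [Module R2 M] [Module.Finite R2 M]
    (d : M →ₗ[R2] M) : Module.Finite R2 (homologyOf d) := by
  have : IsNoetherian R2 M := isNoetherian_of_isNoetherianRing_of_finite R2 M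
  have : Module.Finite R2 (LinearMap.ker d) :=
    Module.Finite.iff_fg.mpr (IsNoetherian.noetherian _)
  exact Module.Finite.quotient R2 _

set_option maxHeartbeats 1000000 in
lemma mapInfPlus_comp_mapMinusInf (M : Type) [AddCommGroup M] [Module R2 M]
    (d : M →ₗ[R2] M) (z : homologyOf d) :
    mapInfPlus d (mapMinusInf d z) = 0 := by
  obtain ⟨⟨x, hx⟩, rfl⟩ := Submodule.Quotient.mk_surjective _ z
  rw [mapMinusInf, mapInfPlus, inducedHom, inducedHom, Submodule.liftQ_apply,
    LinearMap.comp_apply, Submodule.mkQ_apply, Submodule.liftQ_apply, LinearMap.comp_apply,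
    Submodule.mkQ_apply, Submodule.Quotient.mk_eq_zero, Submodule.mem_comap]
  have h0 : Submodule.mkQ (LinearMap.range (iotaMap M)) (iotaMap M x) = 0 := by
    rw [Submodule.mkQ_apply, Submodule.Quotient.mk_eq_zero]
    exact ⟨x, rfl⟩
  show Submodule.mkQ (LinearMap.range (iotaMap M)) (iotaMap M x)
      ∈ LinearMap.range (dPlusMap d)
  rw [h0]
  exact zero_mem _

set_option maxHeartbeats 1000000 in
lemma ker_le_range_aux (M : Type) [AddCommGroup M] [Module R2 M] [Module.Free R2 M]
    (d : M →ₗ[R2] M) (hd : d ∘ₗ d = 0) :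
    LinearMap.ker (mapInfPlus d) ≤ LinearMap.range (mapMinusInf d) := by
  intro z hz
  obtain ⟨⟨x, hx⟩, rfl⟩ := Submodule.Quotient.mk_surjective _ z
  rw [LinearMap.mem_ker, mapInfPlus, inducedHom, Submodule.liftQ_apply,
    LinearMap.comp_apply, Submodule.mkQ_apply, Submodule.Quotient.mk_eq_zero,
    Submodule.mem_comap] at hz
  obtain ⟨q, hq⟩ := hz
  obtain ⟨w, rfl⟩ := Submodule.Quotient.mk_surjective _ q
  have hq' : Submodule.Quotient.mk (p := LinearMap.range (iotaMap M)) (dInf d w)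
      = Submodule.Quotient.mk x := by
    have h3 : dPlusMap d (Submodule.Quotient.mk w) = Submodule.Quotient.mk (dInf d w) := by
      rfl
    rw [h3] at hq
    exact hq
  obtain ⟨cneg, hcneg⟩ := (Submodule.Quotient.eq _).mp hq'
  set c : M := -cneg with hcdef
  have hcx : iotaMap M c = x - dInf d w := by
    rw [hcdef, map_neg, hcneg, neg_sub]
  have hdc : d c = 0 := by
    apply iotaMap_injective M
    rw [map_zero, ← dInf_iota, hcx, map_sub, dInf_sq M d hd]
    have hx0 : dInf d x = 0 := hx
    rw [hx0, zero_sub, neg_zero]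
  refine ⟨Submodule.Quotient.mk ⟨c, hdc⟩, ?_⟩
  rw [mapMinusInf, inducedHom, Submodule.liftQ_apply, LinearMap.comp_apply,
    Submodule.mkQ_apply]
  rw [Submodule.Quotient.eq]
  refine Submodule.mem_comap.mpr ⟨-w, ?_⟩
  show dInf d (-w) = _
  rw [map_neg]
  show -dInf d w = iotaMap M c - x
  rw [hcx, sub_sub_cancel_left]

end Aux

set_option maxHeartbeats 1000000 in
/-- **Lemma 3.2**: if `(C,∂)` is a free, finitely generated chain complex over `𝔽₂[[U]]`
and `H⁺(C)` is finite-dimensional over `𝔽₂`, then `H^∞(C) = 0`. -/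
theorem Hinf_eq_zero_of_finite_Hplus
    (M : Type) [AddCommGroup M] [Module R2 M] [Module.Free R2 M] [Module.Finite R2 M]
    (d : M →ₗ[R2] M) (hd : d ∘ₗ d = 0)
    (hfin : Module.Finite F2 (homologyOf (dPlusMap d))) :
    Subsingleton (homologyOf (dInf d)) := by
  haveI hminus : Module.Finite R2 (homologyOf d) := homologyOf_finite M d
  have hSfg : (LinearMap.range (mapMinusInf d)).FG :=
    Module.Finite.iff_fg.mp (Module.Finite.range (mapMinusInf d))
  have hSker : LinearMap.range (mapMinusInf d) ≤ LinearMap.ker (mapInfPlus d) := by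
    rintro _ ⟨z, rfl⟩
    exact mapInfPlus_comp_mapMinusInf M d z
  have hφinj : Function.Injective
      (Submodule.liftQ (LinearMap.range (mapMinusInf d)) (mapInfPlus d) hSker) := by
    rw [← LinearMap.ker_eq_bot]
    exact Submodule.ker_liftQ_eq_bot _ _ _ (ker_le_range_aux M d hd)
  haveI hnoeth : IsNoetherian F2 (homologyOf (dPlusMap d)) :=
    isNoetherian_of_isNoetherianRing_of_finite F2 _
  haveI hQfinF2 : Module.Finite F2
      (homologyOf (dInf d) ⧸ LinearMap.range (mapMinusInf d)) :=
    Module.Finite.of_injective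
      ((Submodule.liftQ _ (mapInfPlus d) hSker).restrictScalars F2) hφinj
  haveI hQfin : Module.Finite R2
      (homologyOf (dInf d) ⧸ LinearMap.range (mapMinusInf d)) :=
    Module.Finite.of_restrictScalars_finite F2 R2 _
  have hHfg : (⊤ : Submodule R2 (homologyOf (dInf d))).FG := by
    apply Submodule.fg_of_fg_map_of_fg_inf_ker
      (Submodule.mkQ (LinearMap.range (mapMinusInf d)))
    · rw [Submodule.map_top, Submodule.range_mkQ]
      exact Module.finite_def.mp hQfin
    · rw [Submodule.ker_mkQ, top_inf_eq]
      exact hSfg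
  have hbot : (⊤ : Submodule R2 (homologyOf (dInf d))) = ⊥ := by
    apply Submodule.eq_bot_of_le_smul_of_le_jacobson_bot (Ideal.span {(PowerSeries.X : R2)})
      _ hHfg
    · intro z _
      obtain ⟨z', hz'⟩ := exists_X_smul M d z
      rw [hz']
      exact Submodule.smul_mem_smul (Ideal.mem_span_singleton_self _) Submodule.mem_top
    · rw [IsLocalRing.jacobson_eq_maximalIdeal (⊥ : Ideal R2) bot_ne_top]
      rw [← PowerSeries.maximalIdeal_eq_span_X]
  refine ⟨fun a b => ?_⟩
  have ha : a ∈ (⊥ : Submodule R2 (homologyOf (dInf d))) := hbot ▸ Submodule.mem_top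
  have hb : b ∈ (⊥ : Submodule R2 (homologyOf (dInf d))) := hbot ▸ Submodule.mem_top
  rw [Submodule.mem_bot] at ha hb
  rw [ha, hb]

end
end

section
/- Let (C, ∂) be a free, finitely generated chain complex over S = 𝔽₂[U] and let B = (e_i)_{i∈I} be a basis of C. Then Φ_B satisfies the identity Φ_B = ∂ ∘ (d/dU)_B + (d/dU)_B ∘ ∂, where (d/dU)_B : C → C is the 𝔽₂-linear (not S-linear) map defined by writing x = Σ_i q_i e_i with q_i ∈ S and setting (d/dU)_B(x) = Σ_i q_i′ e_i. In particular Φ_B is a chain map: ∂ ∘ Φ_B = Φ_B ∘ ∂. (Identities established in Section 3.2 of the paper.) -/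
/-!
Let `D` differentiate coordinates in the basis `B`. It is additive, kills every `e_i`, and obeys
`D (q • x) = q' • x + q • D x`. Hence the commutator `D ∘ ∂ - ∂ ∘ D` is `S`-linear, since the
Leibniz terms `q' • ∂x` cancel; on `e_i` it equals `D (∂ e_i) = Φ_B e_i`, so it is `Φ_B`.
With `∂ ∘ ∂ = 0` this gives `∂ ∘ Φ_B = ∂ ∘ D ∘ ∂ = -(Φ_B ∘ ∂)`, and over `𝔽₂` all signs disappear.
-/

noncomputable section

abbrev S2 : Type := Polynomial F2

def Phi {C ι : Type} [AddCommGroup C] [Module S2 C] (B : Module.Basis ι S2 C)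
    (d : C →ₗ[S2] C) : C →ₗ[S2] C :=
  B.constr S2 fun i => (B.repr (d (B i))).sum fun j p => (Polynomial.derivative p) • B j

def derivB {C ι : Type} [AddCommGroup C] [Module S2 C] (B : Module.Basis ι S2 C) (x : C) : C :=
  (B.repr x).sum fun i q => (Polynomial.derivative q) • B i

open Polynomial

theorem neg_eq_self_of_charTwo (R : Type*) {M : Type*} [Ring R] [CharP R 2] [AddCommGroup M]
    [Module R M] (x : M) : -x = x := by
  rw [neg_eq_iff_add_eq_zero, ← two_smul R x, CharTwo.two_eq_zero, zero_smul]

namespace Module.Basis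

section Semiring

variable {ι R M : Type*} [CommSemiring R] [AddCommMonoid M] [Module R[X] M] (B : Basis ι R[X] M)

def derivCoeff : M →+ M where
  toFun x := (B.repr x).sum fun i q => derivative q • B i
  map_zero' := by simp
  map_add' x y := by
    rw [map_add, Finsupp.sum_add_index' (by simp) (by simp [add_smul])]

theorem derivCoeff_apply (x : M) :
    B.derivCoeff x = (B.repr x).sum fun i q => derivative q • B i := rfl

@[simp]
theorem derivCoeff_basis (i : ι) : B.derivCoeff (B i) = 0 := by
  simp [derivCoeff_apply]

theorem derivCoeff_smul (q : R[X]) (x : M) :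
    B.derivCoeff (q • x) = derivative q • x + q • B.derivCoeff x := by
  have hx : ((B.repr x).sum fun i c => c • B i) = x := by
    simpa [Finsupp.linearCombination_apply] using B.linearCombination_repr x
  calc B.derivCoeff (q • x)
      = (B.repr x).sum fun i c => derivative q • (c • B i) + q • (derivative c • B i) := by
        rw [derivCoeff_apply, map_smul, Finsupp.sum_smul_index (by simp)]
        simp only [derivative_mul, add_smul, smul_smul]
    _ = derivative q • x + q • B.derivCoeff x := by
        rw [Finsupp.sum_add, ← Finsupp.smul_sum, ← Finsupp.smul_sum, hx, derivCoeff_apply]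

end Semiring

section Ring

variable {ι R M : Type*} [CommRing R] [AddCommGroup M] [Module R[X] M] (B : Basis ι R[X] M)

def derivCoeffCommutator (d : M →ₗ[R[X]] M) : M →ₗ[R[X]] M where
  toFun x := B.derivCoeff (d x) - d (B.derivCoeff x)
  map_add' x y := by simp only [map_add]; abel
  map_smul' q x := by
    simp only [map_smul, derivCoeff_smul, map_add, RingHom.id_apply, smul_sub]
    abel

@[simp]
theorem derivCoeffCommutator_apply (d : M →ₗ[R[X]] M) (x : M) :
    B.derivCoeffCommutator d x = B.derivCoeff (d x) - d (B.derivCoeff x) := rfl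

theorem comp_derivCoeffCommutator {d : M →ₗ[R[X]] M} (hd : d ∘ₗ d = 0) :
    d ∘ₗ B.derivCoeffCommutator d = -(B.derivCoeffCommutator d ∘ₗ d) := by
  have hdd (y : M) : d (d y) = 0 := LinearMap.congr_fun hd y
  ext x
  simp [hdd]

end Ring

end Module.Basis

theorem Phi_eq_derivCoeffCommutator {C ι : Type} [AddCommGroup C] [Module S2 C]
    (B : Module.Basis ι S2 C) (d : C →ₗ[S2] C) : Phi B d = B.derivCoeffCommutator d :=
  B.ext fun i => by simp [Phi, Module.Basis.derivCoeff_apply]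

theorem derivB_eq_derivCoeff {C ι : Type} [AddCommGroup C] [Module S2 C]
    (B : Module.Basis ι S2 C) : derivB B = B.derivCoeff :=
  rfl

theorem Phi_eq_comm_d_derivB_and_chain_map_general
    {C ι : Type} [AddCommGroup C] [Module S2 C]
    (B : Module.Basis ι S2 C) (d : C →ₗ[S2] C) (hd : d ∘ₗ d = 0) :
    (∀ x : C, Phi B d x = d (derivB B x) + derivB B (d x)) ∧
      d ∘ₗ Phi B d = Phi B d ∘ₗ d := by
  rw [Phi_eq_derivCoeffCommutator, derivB_eq_derivCoeff]
  refine ⟨fun x => ?_, ?_⟩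
  · rw [Module.Basis.derivCoeffCommutator_apply, sub_eq_add_neg, neg_eq_self_of_charTwo S2,
      add_comm]
  · rw [B.comp_derivCoeffCommutator hd, neg_eq_self_of_charTwo S2]

/-- `Φ_B = ∂ ∘ (d/dU)_B + (d/dU)_B ∘ ∂`; in particular `Φ_B` is a chain map
(identities of Section 3.2 of the paper). -/
theorem Phi_eq_comm_d_derivB_and_chain_map
    {C ι : Type} [AddCommGroup C] [Module S2 C] [Fintype ι]
    (B : Module.Basis ι S2 C) (d : C →ₗ[S2] C) (hd : d ∘ₗ d = 0) :
    (∀ x : C, Phi B d x = d (derivB B x) + derivB B (d x)) ∧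
      d ∘ₗ Phi B d = Phi B d ∘ₗ d :=
  Phi_eq_comm_d_derivB_and_chain_map_general B d hd

end
end

section
/- Let (C₁, ∂₁) and (C₂, ∂₂) be free, finitely generated chain complexes over S = 𝔽₂[U] with chosen bases B₁ and B₂ respectively, and let F : C₁ → C₂ be an S-linear chain map (F ∘ ∂₁ = ∂₂ ∘ F). Then F ∘ Φ_{B₁} + Φ_{B₂} ∘ F is null-homotopic: there exists an S-linear map H : C₁ → C₂ with F ∘ Φ_{B₁} + Φ_{B₂} ∘ F = ∂₂ ∘ H + H ∘ ∂₁. (General naturality statement proved in the proof of Lemma 3.3 of the paper.) -/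
noncomputable section

/-!
A derivation `D` of the coefficient ring, applied coordinatewise in a basis `B`, gives an
additive (not linear) map `δ_B`, and `Φ_B = δ_B ∘ ∂ - ∂ ∘ δ_B`. More generally, the linear map
whose matrix is obtained by applying `D` to the matrix of `L` is the commutator
`[δ, L] = δ_{B₂} ∘ L - L ∘ δ_{B₁}`, so it obeys the Leibniz rule
`[δ, G ∘ K] = [δ, G] ∘ K + G ∘ [δ, K]`. Applying `[δ, -]` to `F ∘ ∂₁ = ∂₂ ∘ F` gives
`F ∘ Φ_{B₁} - Φ_{B₂} ∘ F = ∂₂ ∘ [δ, F] - [δ, F] ∘ ∂₁`, and in characteristic 2 signs disappear.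
-/

open Module

section DerivMatrix

variable {R A : Type*} [CommSemiring R] [CommRing A] [Algebra R A] (D : Derivation R A A)
variable {ι ι₁ ι₂ ι₃ M M₁ M₂ M₃ : Type*} [AddCommGroup M] [Module A M]
  [AddCommGroup M₁] [Module A M₁] [AddCommGroup M₂] [Module A M₂] [AddCommGroup M₃] [Module A M₃]

def derivCoeffs (B : Basis ι A M) : M →+ M :=
  B.repr.symm.toAddMonoidHom.comp <|
    (Finsupp.mapRange.addMonoidHom D.toLinearMap.toAddMonoidHom).comp B.repr.toAddMonoidHom

theorem derivCoeffs_apply (B : Basis ι A M) (x : M) :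
    derivCoeffs D B x = (B.repr x).sum fun j c => D c • B j := by
  simp [derivCoeffs, Finsupp.linearCombination_apply, Finsupp.sum_mapRange_index]

theorem derivCoeffs_basis (B : Basis ι A M) (i : ι) : derivCoeffs D B (B i) = 0 := by
  simp [derivCoeffs_apply]

theorem derivCoeffs_smul (B : Basis ι A M) (a : A) (x : M) :
    derivCoeffs D B (a • x) = D a • x + a • derivCoeffs D B x := by
  apply B.repr.injective
  ext j
  simp [derivCoeffs, Derivation.leibniz, add_comm, mul_comm]

def derivMatrix (B₁ : Basis ι₁ A M₁) (B₂ : Basis ι₂ A M₂) (L : M₁ →ₗ[A] M₂) : M₁ →ₗ[A] M₂ where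
  toFun x := derivCoeffs D B₂ (L x) - L (derivCoeffs D B₁ x)
  map_add' x y := by simp only [map_add]; abel
  map_smul' a x := by simp only [map_smul, derivCoeffs_smul, map_add, smul_sub, RingHom.id_apply]; abel

theorem derivMatrix_apply (B₁ : Basis ι₁ A M₁) (B₂ : Basis ι₂ A M₂) (L : M₁ →ₗ[A] M₂) (x : M₁) :
    derivMatrix D B₁ B₂ L x = derivCoeffs D B₂ (L x) - L (derivCoeffs D B₁ x) :=
  rfl

theorem derivMatrix_basis (B₁ : Basis ι₁ A M₁) (B₂ : Basis ι₂ A M₂) (L : M₁ →ₗ[A] M₂) (i : ι₁) :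
    derivMatrix D B₁ B₂ L (B₁ i) = (B₂.repr (L (B₁ i))).sum fun j c => D c • B₂ j := by
  rw [derivMatrix_apply, derivCoeffs_basis, map_zero, sub_zero, derivCoeffs_apply]

theorem derivMatrix_comp (B₁ : Basis ι₁ A M₁) (B₂ : Basis ι₂ A M₂) (B₃ : Basis ι₃ A M₃)
    (G : M₂ →ₗ[A] M₃) (K : M₁ →ₗ[A] M₂) :
    derivMatrix D B₁ B₃ (G ∘ₗ K) = derivMatrix D B₂ B₃ G ∘ₗ K + G ∘ₗ derivMatrix D B₁ B₂ K := by
  ext x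
  simp only [LinearMap.add_apply, LinearMap.comp_apply, derivMatrix_apply, map_sub]
  abel

theorem comp_derivMatrix_sub_derivMatrix_comp (B₁ : Basis ι₁ A M₁) (B₂ : Basis ι₂ A M₂)
    {d₁ : M₁ →ₗ[A] M₁} {d₂ : M₂ →ₗ[A] M₂} {F : M₁ →ₗ[A] M₂} (hF : F ∘ₗ d₁ = d₂ ∘ₗ F) :
    F ∘ₗ derivMatrix D B₁ B₁ d₁ - derivMatrix D B₂ B₂ d₂ ∘ₗ F =
      d₂ ∘ₗ derivMatrix D B₁ B₂ F - derivMatrix D B₁ B₂ F ∘ₗ d₁ := by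
  have leibniz := congrArg (derivMatrix D B₁ B₂) hF
  rw [derivMatrix_comp D B₁ B₁ B₂, derivMatrix_comp D B₁ B₂ B₂] at leibniz
  rw [sub_eq_sub_iff_add_eq_add, add_comm, leibniz, add_comm]

end DerivMatrix

theorem Phi_eq_derivMatrix {C ι : Type} [AddCommGroup C] [Module S2 C] (B : Basis ι S2 C)
    (d : C →ₗ[S2] C) : Phi B d = derivMatrix Polynomial.derivative' B B d :=
  B.ext fun i => by
    rw [Phi, Basis.constr_basis, derivMatrix_basis]
    simp only [Polynomial.derivative'_apply]

theorem sub_eq_add_of_charTwo (R : Type*) {M : Type*} [Ring R] [CharP R 2] [AddCommGroup M]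
    [Module R M] (x y : M) : x - y = x + y := by
  rw [sub_eq_add_neg, ← neg_one_smul R y, CharTwo.neg_eq, one_smul]

theorem Phi_natural_up_to_chain_homotopy_general
    {C₁ C₂ ι₁ ι₂ : Type} [AddCommGroup C₁] [Module S2 C₁] [AddCommGroup C₂] [Module S2 C₂]
    (d₁ : C₁ →ₗ[S2] C₁)
    (d₂ : C₂ →ₗ[S2] C₂)
    (B₁ : Module.Basis ι₁ S2 C₁) (B₂ : Module.Basis ι₂ S2 C₂)
    (F : C₁ →ₗ[S2] C₂) (hF : F ∘ₗ d₁ = d₂ ∘ₗ F) :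
    ∃ H : C₁ →ₗ[S2] C₂, F ∘ₗ Phi B₁ d₁ + Phi B₂ d₂ ∘ₗ F = d₂ ∘ₗ H + H ∘ₗ d₁ := by
  refine ⟨derivMatrix Polynomial.derivative' B₁ B₂ F, ?_⟩
  have natural := comp_derivMatrix_sub_derivMatrix_comp Polynomial.derivative' B₁ B₂ hF
  simpa only [Phi_eq_derivMatrix, sub_eq_add_of_charTwo S2] using natural

/-- **Naturality of `Φ` (proof of Lemma 3.3)**: if `F : (C₁,∂₁) → (C₂,∂₂)` is an
`S`-linear chain map between free, finitely generated chain complexes over `S = 𝔽₂[U]`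
with chosen bases `B₁`, `B₂`, then `F ∘ Φ_{B₁} + Φ_{B₂} ∘ F` is null-homotopic. -/
theorem Phi_natural_up_to_chain_homotopy
    {C₁ C₂ ι₁ ι₂ : Type} [AddCommGroup C₁] [Module S2 C₁] [AddCommGroup C₂] [Module S2 C₂]
    [Fintype ι₁] [Fintype ι₂]
    (d₁ : C₁ →ₗ[S2] C₁) (hd₁ : d₁ ∘ₗ d₁ = 0)
    (d₂ : C₂ →ₗ[S2] C₂) (hd₂ : d₂ ∘ₗ d₂ = 0)
    (B₁ : Module.Basis ι₁ S2 C₁) (B₂ : Module.Basis ι₂ S2 C₂)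
    (F : C₁ →ₗ[S2] C₂) (hF : F ∘ₗ d₁ = d₂ ∘ₗ F) :
    ∃ H : C₁ →ₗ[S2] C₂, F ∘ₗ Phi B₁ d₁ + Phi B₂ d₂ ∘ₗ F = d₂ ∘ₗ H + H ∘ₗ d₁ :=
  Phi_natural_up_to_chain_homotopy_general d₁ d₂ B₁ B₂ F hF

end
end

section
/- Let Y be a topological space and let f : Y → ℝ be a continuous function with 1 ≤ f(y) ≤ 3 for all y ∈ Y. Define F : Y × ℝ → ℝ by F(y, s) = (1 − s²)·f(y). For t ∈ [1, 3], set M_t := {(y, s) ∈ Y × [−1, 1] : F(y, s) = t} and Y_t := {y ∈ Y : f(y) ≥ t}. Then the projection map (y, s) ↦ y restricts to a homeomorphism from M_t ∩ (Y × [−1, 0]) onto Y_t, and also restricts to a homeomorphism from M_t ∩ (Y × [0, 1]) onto Y_t. (The homeomorphism assertions of Lemma 5.1 of the paper.) -/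
/-! On the level set `(1 - s²) f(y) = t` with `s ≥ 0` the coordinate `s` is determined by `y`,
namely `s = √(1 - t / f y)`, which is real exactly when `t ≤ f y`; with `s ≤ 0` it is the negative
root. So each half of the level set is the graph of a continuous function on `Y_t`, and the
projection of a graph onto its domain is a homeomorphism. -/

open Set

def Homeomorph.subtypeGraph {X Z : Type*} [TopologicalSpace X] [TopologicalSpace Z]
    {P : X × Z → Prop} {Q : X → Prop} (g : X → Z) (hg : ContinuousOn g {x | Q x})
    (hPQ : ∀ x z, P (x, z) ↔ Q x ∧ z = g x) : {p : X × Z // P p} ≃ₜ {x // Q x} where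
  toFun p := ⟨p.1.1, ((hPQ _ _).1 p.2).1⟩
  invFun x := ⟨(x.1, g x.1), (hPQ _ _).2 ⟨x.2, rfl⟩⟩
  left_inv p := Subtype.ext <| Prod.ext rfl ((hPQ _ _).1 p.2).2.symm
  right_inv _ := rfl
  continuous_toFun := (continuous_fst.comp continuous_subtype_val).subtype_mk _
  continuous_invFun := (continuous_subtype_val.prodMk hg.domRestrict).subtype_mk _

theorem mem_Icc_zero_one_and_one_sub_sq_mul_eq_iff {s c t : ℝ} (hc : 0 < c) (ht : 0 ≤ t) :
    s ∈ Icc (0 : ℝ) 1 ∧ (1 - s ^ 2) * c = t ↔ t ≤ c ∧ s = √(1 - t / c) := by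
  have hsq : (1 - s ^ 2) * c = t ↔ s ^ 2 = 1 - t / c := by
    rw [eq_sub_iff_add_eq, ← eq_sub_iff_add_eq', div_eq_iff hc.ne']
    exact eq_comm
  rw [hsq]
  constructor
  · rintro ⟨⟨hs0, hs1⟩, hs⟩
    refine ⟨?_, by rw [← hs, Real.sqrt_sq hs0]⟩
    rw [← div_le_one hc]
    nlinarith
  · rintro ⟨htc, rfl⟩
    have hrad : 0 ≤ 1 - t / c := by rwa [sub_nonneg, div_le_one hc]
    refine ⟨⟨Real.sqrt_nonneg _, Real.sqrt_le_one.mpr ?_⟩, Real.sq_sqrt hrad⟩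
    linarith [div_nonneg ht hc.le]

theorem mem_Icc_neg_one_zero_and_one_sub_sq_mul_eq_iff {s c t : ℝ} (hc : 0 < c) (ht : 0 ≤ t) :
    s ∈ Icc (-1 : ℝ) 0 ∧ (1 - s ^ 2) * c = t ↔ t ≤ c ∧ s = -√(1 - t / c) := by
  have h := mem_Icc_zero_one_and_one_sub_sq_mul_eq_iff (s := -s) hc ht
  rwa [Set.neg_mem_Icc_iff, neg_zero, neg_sq, neg_eq_iff_eq_neg] at h

theorem levelSet_of_trace_cobordism_homeomorph_general
    (Y : Type) [TopologicalSpace Y] (f : Y → ℝ) (hf : Continuous f)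
    (hf1 : ∀ y, 1 ≤ f y)
    (t : ℝ) (ht : t ∈ Set.Icc (1 : ℝ) 3) :
    (∃ e : {p : Y × ℝ // p.2 ∈ Set.Icc (-1 : ℝ) 0 ∧ (1 - p.2 ^ 2) * f p.1 = t} ≃ₜ
        {y : Y // t ≤ f y},
      ∀ p, (e p : Y) = (p : Y × ℝ).1) ∧
    (∃ e : {p : Y × ℝ // p.2 ∈ Set.Icc (0 : ℝ) 1 ∧ (1 - p.2 ^ 2) * f p.1 = t} ≃ₜ
        {y : Y // t ≤ f y},
      ∀ p, (e p : Y) = (p : Y × ℝ).1) := by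
  have hf_pos : ∀ y, 0 < f y := fun y => one_pos.trans_le (hf1 y)
  have ht_nonneg : 0 ≤ t := zero_le_one.trans ht.1
  have hroot : Continuous fun y => √(1 - t / f y) :=
    (continuous_const.sub (continuous_const.div hf fun y => (hf_pos y).ne')).sqrt
  exact ⟨⟨.subtypeGraph _ hroot.neg.continuousOn fun y s =>
      mem_Icc_neg_one_zero_and_one_sub_sq_mul_eq_iff (hf_pos y) ht_nonneg, fun _ => rfl⟩,
    ⟨.subtypeGraph _ hroot.continuousOn fun y s =>
      mem_Icc_zero_one_and_one_sub_sq_mul_eq_iff (hf_pos y) ht_nonneg, fun _ => rfl⟩⟩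

/-- **Level sets of the trace cobordism (Lemma 5.1, homeomorphism part)**: for a continuous
`f : Y → ℝ` with `1 ≤ f ≤ 3` and `F(y,s) = (1 - s²)·f(y)`, for any `t ∈ [1,3]` the
projection `(y,s) ↦ y` restricts to a homeomorphism from
`M_t ∩ (Y × [-1,0]) = {(y,s) : s ∈ [-1,0], F(y,s) = t}` onto `Y_t = {y : f(y) ≥ t}`,
and likewise from `M_t ∩ (Y × [0,1])` onto `Y_t`. -/
theorem levelSet_of_trace_cobordism_homeomorph
    (Y : Type) [TopologicalSpace Y] (f : Y → ℝ) (hf : Continuous f)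
    (hf1 : ∀ y, 1 ≤ f y) (hf3 : ∀ y, f y ≤ 3)
    (t : ℝ) (ht : t ∈ Set.Icc (1 : ℝ) 3) :
    (∃ e : {p : Y × ℝ // p.2 ∈ Set.Icc (-1 : ℝ) 0 ∧ (1 - p.2 ^ 2) * f p.1 = t} ≃ₜ
        {y : Y // t ≤ f y},
      ∀ p, (e p : Y) = (p : Y × ℝ).1) ∧
    (∃ e : {p : Y × ℝ // p.2 ∈ Set.Icc (0 : ℝ) 1 ∧ (1 - p.2 ^ 2) * f p.1 = t} ≃ₜ
        {y : Y // t ≤ f y},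
      ∀ p, (e p : Y) = (p : Y × ℝ).1) :=
  levelSet_of_trace_cobordism_homeomorph_general Y f hf hf1 t ht
end
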